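/- arXiv:1503.06625 — 6 statements merged into one kernel-verified Lean document; each statement's English description precedes it below -/
import Mathlib

section
/- Let X be a Hausdorff topological space and let μ₁, μ₂ be two distinct finite tight (i.e., inner regular with respect to compact sets) Borel measures on X with μ₁(X) = μ₂(X). Then there exists a Borel set A ⊆ X such that μ₁(closure A) < μ₂(interior A). -/
open MeasureTheory Topology

theorem stmt0 {X : Type*} [TopologicalSpace X] [T2Space X] [MeasurableSpace X] [BorelSpace X]
    (μ₁ μ₂ : Measure X) [IsFiniteMeasure μ₁] [IsFiniteMeasure μ₂]
    (h₁ : μ₁.InnerRegularWRT IsCompact MeasurableSet)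
    (h₂ : μ₂.InnerRegularWRT IsCompact MeasurableSet)
    (hne : μ₁ ≠ μ₂) (hmass : μ₁ Set.univ = μ₂ Set.univ) :
    ∃ A : Set X, MeasurableSet A ∧ μ₁ (closure A) < μ₂ (interior A) := by
  -- Step 1: find a measurable B with μ₁ B < μ₂ B
  obtain ⟨B, hB, hBlt⟩ : ∃ B : Set X, MeasurableSet B ∧ μ₁ B < μ₂ B := by
    by_contra hcon
    push_neg at hcon
    apply hne
    ext s hs
    refine le_antisymm ?_ (hcon s hs)
    have h1 := hcon sᶜ hs.compl
    have e1 : μ₁ sᶜ = μ₁ Set.univ - μ₁ s := measure_compl hs (measure_ne_top _ _)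
    have e2 : μ₂ sᶜ = μ₂ Set.univ - μ₂ s := measure_compl hs (measure_ne_top _ _)
    rw [e1, e2, hmass] at h1
    have hs1 : μ₁ s ≤ μ₂ Set.univ := hmass ▸ measure_mono (Set.subset_univ s)
    have hs2 : μ₂ s ≤ μ₂ Set.univ := measure_mono (Set.subset_univ s)
    exact (ENNReal.sub_le_sub_iff_left hs1 (measure_ne_top _ _)).mp h1
  -- Step 2: compact K ⊆ B with μ₁ B < μ₂ K
  obtain ⟨K, hKB, hKc, hKlt⟩ := h₂ hB (μ₁ B) hBlt
  have hKcl : IsClosed K := hKc.isClosed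
  have hKm : MeasurableSet K := hKcl.measurableSet
  have hμ₁K : μ₁ K ≤ μ₁ B := measure_mono hKB
  -- Step 3: compact L ⊆ Kᶜ with μ₁ univ - μ₂ K < μ₁ L
  have hKle : μ₂ K ≤ μ₁ Set.univ := hmass ▸ measure_mono (Set.subset_univ K)
  have hr : μ₁ Set.univ - μ₂ K < μ₁ Kᶜ := by
    apply ENNReal.sub_lt_of_lt_add hKle
    calc μ₁ Set.univ = μ₁ K + μ₁ Kᶜ := (measure_add_measure_compl hKm).symm
    _ < μ₂ K + μ₁ Kᶜ := by
        exact (ENNReal.add_lt_add_iff_right (measure_ne_top _ _)).mpr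
          (lt_of_le_of_lt hμ₁K hKlt)
    _ = μ₁ Kᶜ + μ₂ K := add_comm _ _
  obtain ⟨L, hLK, hLc, hLlt⟩ := h₁ hKm.compl _ hr
  have hLm : MeasurableSet L := hLc.isClosed.measurableSet
  -- μ₁ Lᶜ < μ₂ K
  have hLcompl : μ₁ Lᶜ < μ₂ K := by
    rw [measure_compl hLm (measure_ne_top _ _)]
    exact ENNReal.sub_lt_of_sub_lt (measure_mono (Set.subset_univ L))
      (Or.inl (measure_ne_top _ _)) hLlt
  -- Step 4: separate K and L
  have hdisj : Disjoint K L := Set.disjoint_left.mpr fun x hx hx' => hLK hx' hx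
  obtain ⟨U, V, hUo, hVo, hKU, hLV, hUV⟩ :=
    SeparatedNhds.of_isCompact_isCompact hKc hLc hdisj
  refine ⟨U, hUo.measurableSet, ?_⟩
  have h1 : μ₁ (closure U) ≤ μ₁ Lᶜ := by
    apply measure_mono
    have hUVc : closure U ⊆ Vᶜ := by
      rw [← hVo.isClosed_compl.closure_eq]
      exact closure_mono (Set.subset_compl_iff_disjoint_right.mpr hUV)
    exact hUVc.trans (Set.compl_subset_compl.mpr hLV)
  have h2 : μ₂ K ≤ μ₂ (interior U) := by
    rw [hUo.interior_eq]; exact measure_mono hKU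
  exact lt_of_le_of_lt h1 (lt_of_lt_of_le hLcompl h2)
end

section
/- Let X be a Hausdorff space and let μ₁, μ₂ be finite tight Borel measures on X. If μ₂(closure A) ≥ μ₁(interior A) for every Borel set A ⊆ X and μ₁(X) = μ₂(X), then μ₁ = μ₂. -/
/-!
Separating disjoint compacts `K` and `L` by open sets `U ⊇ K` and `V ⊇ L` with
`closure U ∩ V = ∅` gives `μ₁ K + μ₂ L ≤ μ₂ (closure U) + μ₂ V ≤ μ₂ X`. Taking suprema over compact
`K ⊆ A` and `L ⊆ Aᶜ` (tightness) yields `μ₁ A + μ₂ Aᶜ ≤ μ₂ X`, i.e. `μ₁ A ≤ μ₂ A` for every Borel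
`A`; measures with `μ₁ ≤ μ₂` and equal finite total mass coincide.
-/

open MeasureTheory Topology

open scoped ENNReal

namespace MeasureTheory

theorem Measure.InnerRegularWRT.measure_le_of_forall_subset_le {α : Type*} [MeasurableSpace α]
    {μ : Measure α} {p q : Set α → Prop} (H : μ.InnerRegularWRT p q) {A : Set α} (hA : q A)
    {c : ℝ≥0∞} (hc : ∀ K ⊆ A, p K → μ K ≤ c) : μ A ≤ c := by
  rw [H.measure_eq_iSup hA]
  exact iSup₂_le fun K hKA => iSup_le (hc K hKA)

variable {X : Type*} [TopologicalSpace X] [MeasurableSpace X] {μ₁ μ₂ : Measure X}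

theorem measure_add_measure_le_measure_univ_of_isCompact [T2Space X] [OpensMeasurableSpace X]
    (hcl : ∀ U, IsOpen U → μ₁ U ≤ μ₂ (closure U)) {K L : Set X} (hK : IsCompact K)
    (hL : IsCompact L) (hKL : Disjoint K L) : μ₁ K + μ₂ L ≤ μ₂ Set.univ := by
  obtain ⟨U, V, hU, hV, hKU, hLV, hUV⟩ := SeparatedNhds.of_isCompact_isCompact hK hL hKL
  calc μ₁ K + μ₂ L ≤ μ₂ (closure U) + μ₂ V :=
        add_le_add ((measure_mono hKU).trans (hcl U hU)) (measure_mono hLV)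
    _ = μ₂ (closure U ∪ V) := (measure_union (hUV.closure_left hV) hV.measurableSet).symm
    _ ≤ μ₂ Set.univ := measure_mono (Set.subset_univ _)

theorem Measure.le_of_forall_isOpen_le_closure [T2Space X] [OpensMeasurableSpace X]
    [IsFiniteMeasure μ₂] (h₁ : μ₁.InnerRegularWRT IsCompact MeasurableSet)
    (h₂ : μ₂.InnerRegularWRT IsCompact MeasurableSet)
    (hcl : ∀ U, IsOpen U → μ₁ U ≤ μ₂ (closure U)) : μ₁ ≤ μ₂ := by
  refine Measure.le_iff.2 fun A hA => h₁.measure_le_of_forall_subset_le hA fun K hKA hK => ?_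
  have hK_le : μ₁ K ≤ μ₂ Set.univ := by
    simpa using measure_add_measure_le_measure_univ_of_isCompact hcl hK isCompact_empty
      (Set.disjoint_empty K)
  have hK_ne_top : μ₁ K ≠ ∞ := ne_top_of_le_ne_top (measure_ne_top μ₂ _) hK_le
  have hK_add : μ₁ K + μ₂ Aᶜ ≤ μ₂ Set.univ := by
    rw [← ENNReal.le_sub_iff_add_le_left hK_ne_top hK_le]
    refine h₂.measure_le_of_forall_subset_le hA.compl fun L hLA hL => ?_
    refine ENNReal.le_sub_of_add_le_left hK_ne_top ?_
    exact measure_add_measure_le_measure_univ_of_isCompact hcl hK hL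
      (Set.disjoint_left.2 fun x hxK hxL => hLA hxL (hKA hxK))
  rw [← measure_add_measure_compl hA] at hK_add
  exact ENNReal.le_of_add_le_add_right (measure_ne_top μ₂ _) hK_add

end MeasureTheory

theorem stmt1 {X : Type*} [TopologicalSpace X] [T2Space X] [MeasurableSpace X] [BorelSpace X]
    (μ₁ μ₂ : Measure X) [IsFiniteMeasure μ₁] [IsFiniteMeasure μ₂]
    (h₁ : μ₁.InnerRegularWRT IsCompact MeasurableSet)
    (h₂ : μ₂.InnerRegularWRT IsCompact MeasurableSet)
    (hcl : ∀ A : Set X, MeasurableSet A → μ₁ (interior A) ≤ μ₂ (closure A))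
    (hmass : μ₁ Set.univ = μ₂ Set.univ) :
    μ₁ = μ₂ := by
  have hopen : ∀ U : Set X, IsOpen U → μ₁ U ≤ μ₂ (closure U) := fun U hU => by
    simpa only [hU.interior_eq] using hcl U hU.measurableSet
  exact Measure.eq_of_le_of_measure_univ_eq (Measure.le_of_forall_isOpen_le_closure h₁ h₂ hopen)
    hmass
end

section
/- The space of finite tight Borel measures on a Hausdorff space X, endowed with the weak-star semi-continuity topology (the smallest topology making μ ↦ ∫ f dμ upper semicontinuous for every bounded upper semicontinuous f : X → ℝ), is a Hausdorff topological space. -/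
open MeasureTheory Topology

/-- The space of finite tight Borel measures on a Hausdorff space. -/
def TightFiniteMeasure (X : Type*) [TopologicalSpace X] [MeasurableSpace X] : Type _ :=
  {μ : Measure X // IsFiniteMeasure μ ∧ μ.InnerRegularWRT IsCompact MeasurableSet}

/-- The weak-star semi-continuity topology: the smallest topology making
`μ ↦ ∫ f dμ` upper semicontinuous for every bounded upper semicontinuous `f`. -/
def wscTopology (X : Type*) [TopologicalSpace X] [MeasurableSpace X] :
    TopologicalSpace (TightFiniteMeasure X) :=
  TopologicalSpace.generateFrom
    {S | ∃ (f : X → ℝ) (a : ℝ), (∃ C : ℝ, ∀ x, |f x| ≤ C) ∧ UpperSemicontinuous f ∧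
      S = {μ : TightFiniteMeasure X | ∫ x, f x ∂μ.1 < a}}

/-! Two distinct tight measures differ on some compact set `K`, say `μ K < ν K`.
Inner regularity of `μ` on `Kᶜ` gives a compact `L ⊆ Kᶜ` carrying almost all of `μ Kᶜ`;
separating `K` and `L` by disjoint open sets `U ⊇ K`, `W ⊇ L` yields the closed set
`F = Wᶜ ⊇ U` with `μ F < ν K ≤ ν U`. Since `ρ ↦ ρ F` is upper and `ρ ↦ ρ U` lower
semicontinuous (integrate `1_F` and `-1_U`), a real threshold strictly between `μ F` and `ν K`
separates `μ` from `ν`, because `ρ U ≤ ρ F` for every `ρ`. -/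

theorem IsCompact.exists_isOpen_isClosed_measure_lt {X : Type*} [TopologicalSpace X]
    [T2Space X] [MeasurableSpace X] [OpensMeasurableSpace X] {μ : Measure X}
    [IsFiniteMeasure μ] [μ.InnerRegular] {K : Set X} (hK : IsCompact K) {c : ENNReal}
    (hc : μ K < c) :
    ∃ U F, IsOpen U ∧ IsClosed F ∧ K ⊆ U ∧ U ⊆ F ∧ μ F < c := by
  obtain ⟨ε, hε, hεc⟩ := ENNReal.lt_iff_exists_add_pos_lt.1 hc
  obtain ⟨L, hLK, hL, hμL⟩ := hK.isClosed.isOpen_compl.measurableSet.exists_isCompact_sdiff_lt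
    (MeasureTheory.measure_ne_top μ _) (ENNReal.coe_ne_zero.2 hε.ne')
  obtain ⟨U, W, hU, hW, hKU, hLW, hUW⟩ :=
    SeparatedNhds.of_isCompact_isCompact hK hL (Set.subset_compl_iff_disjoint_right.1 hLK).symm
  refine ⟨U, Wᶜ, hU, hW.isClosed_compl, hKU, hUW.subset_compl_right, ?_⟩
  calc μ Wᶜ ≤ μ (K ∪ Kᶜ \ L) :=
        measure_mono fun x hx => (em (x ∈ K)).imp id fun hxK => ⟨hxK, fun hxL => hx (hLW hxL)⟩
    _ ≤ μ K + μ (Kᶜ \ L) := measure_union_le _ _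
    _ < μ K + ε := ENNReal.add_lt_add_left (MeasureTheory.measure_ne_top μ _) hμL
    _ < c := hεc

namespace TightFiniteMeasure

variable {X : Type*} [TopologicalSpace X] [MeasurableSpace X]

instance (μ : TightFiniteMeasure X) : IsFiniteMeasure μ.1 := μ.2.1

instance (μ : TightFiniteMeasure X) : μ.1.InnerRegular := ⟨μ.2.2⟩

theorem ext_of_forall_isCompact {μ ν : TightFiniteMeasure X}
    (h : ∀ K, IsCompact K → μ.1 K = ν.1 K) : μ = ν :=
  Subtype.ext <| Measure.ext fun _ hs => μ.2.2.eq_of_innerRegularWRT_of_forall_eq ν.2.2 h hs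

theorem isOpen_setOf_integral_lt {f : X → ℝ} (hf : ∃ C, ∀ x, |f x| ≤ C)
    (hfu : UpperSemicontinuous f) (a : ℝ) :
    IsOpen[wscTopology X] {μ : TightFiniteMeasure X | ∫ x, f x ∂μ.1 < a} :=
  TopologicalSpace.isOpen_generateFrom_of_mem ⟨f, a, hf, hfu, rfl⟩

variable [OpensMeasurableSpace X]

theorem isOpen_setOf_measureReal_lt {F : Set X} (hF : IsClosed F) (a : ℝ) :
    IsOpen[wscTopology X] {μ : TightFiniteMeasure X | μ.1.real F < a} := by
  simpa [integral_indicator_const _ hF.measurableSet] using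
    isOpen_setOf_integral_lt (f := F.indicator fun _ => 1)
      ⟨_, fun x => (norm_indicator_le_norm_self (fun _ => (1 : ℝ)) x :)⟩ (hF.upperSemicontinuous_indicator zero_le_one) a

theorem isOpen_setOf_lt_measureReal {U : Set X} (hU : IsOpen U) (a : ℝ) :
    IsOpen[wscTopology X] {μ : TightFiniteMeasure X | a < μ.1.real U} := by
  simpa [integral_indicator_const _ hU.measurableSet] using
    isOpen_setOf_integral_lt (f := U.indicator fun _ => -1)
      ⟨_, fun x => (norm_indicator_le_norm_self (fun _ => (-1 : ℝ)) x :)⟩ (hU.upperSemicontinuous_indicator (by norm_num))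
      (-a)

theorem exists_isOpen_disjoint_of_measure_lt [T2Space X] {μ ν : TightFiniteMeasure X}
    {K : Set X} (hK : IsCompact K) (h : μ.1 K < ν.1 K) :
    ∃ u v, IsOpen[wscTopology X] u ∧ IsOpen[wscTopology X] v ∧ μ ∈ u ∧ ν ∈ v ∧ Disjoint u v := by
  obtain ⟨U, F, hU, hF, hKU, hUF, hμF⟩ := hK.exists_isOpen_isClosed_measure_lt h
  have hμν : μ.1.real F < ν.1.real U :=
    ((ENNReal.toReal_lt_toReal (measure_ne_top _ _) (measure_ne_top _ _)).2 hμF).trans_le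
      (measureReal_mono hKU)
  obtain ⟨a, hμa, haν⟩ := exists_between hμν
  refine ⟨_, _, isOpen_setOf_measureReal_lt hF a, isOpen_setOf_lt_measureReal hU a, hμa, haν,
    Set.disjoint_left.2 fun ρ hρF hρU => ?_⟩
  exact lt_irrefl a (hρU.trans_le (measureReal_mono hUF) |>.trans hρF)

end TightFiniteMeasure

open TightFiniteMeasure in
theorem stmt2 {X : Type*} [TopologicalSpace X] [T2Space X] [MeasurableSpace X] [BorelSpace X] :
    @T2Space (TightFiniteMeasure X) (wscTopology X) := by
  let := wscTopology X
  refine ⟨fun μ ν hne => ?_⟩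
  obtain ⟨K, hK, hKne⟩ : ∃ K, IsCompact K ∧ μ.1 K ≠ ν.1 K := by
    by_contra! h
    exact hne (ext_of_forall_isCompact h)
  rcases hKne.lt_or_gt with h | h
  · exact exists_isOpen_disjoint_of_measure_lt hK h
  · obtain ⟨v, u, hv, hu, hνv, hμu, hvu⟩ := exists_isOpen_disjoint_of_measure_lt hK h
    exact ⟨u, v, hu, hv, hμu, hνv, hvu.symm⟩
end

section
/- Let Z and X be topological spaces with Z a Lusin space continuously and injectively embedded into a metrizable space X. Then every Borel subset of Z is a Borel subset of X. -/
open MeasureTheory Topology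

theorem stmt6 {Z X : Type*} [TopologicalSpace Z] [T2Space Z]
    [TopologicalSpace X] [TopologicalSpace.MetrizableSpace X]
    [MeasurableSpace Z] [BorelSpace Z] [MeasurableSpace X] [BorelSpace X]
    -- `Z` is a Lusin space: the image of a Polish space under a continuous bijection
    (P : Type*) [TopologicalSpace P] [PolishSpace P]
    (g : P → Z) (hgc : Continuous g) (hgb : Function.Bijective g)
    -- `Z` is continuously and injectively embedded into `X`
    (j : Z → X) (hjc : Continuous j) (hji : Function.Injective j) :
    ∀ B : Set Z, MeasurableSet B → MeasurableSet (j '' B) := by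
  intro B hB
  letI : MeasurableSpace P := borel P
  haveI : BorelSpace P := ⟨rfl⟩
  have hA : MeasurableSet (g ⁻¹' B) := (hgc.measurable) hB
  have him : (j ∘ g) '' (g ⁻¹' B) = j '' B := by
    rw [Set.image_comp, Set.image_preimage_eq B hgb.surjective]
  rw [← him]
  exact hA.image_of_continuousOn_injOn (hjc.comp hgc).continuousOn
    ((hji.comp hgb.injective).injOn)
end

section
/- Let X and W be Hausdorff spaces, I ⊆ ℝ an interval, and F : I × X → W a function measurable with respect to the product of the Lebesgue σ-algebra on I and the Borel σ-algebra on X (into the Borel σ-algebra of W). Then the Nemytskii operator G : I × C(I, X) → W defined by G(t, u) = F(t, u(t)), with C(I, X) carrying the compact-open topology, is measurable with respect to the product of the Lebesgue σ-algebra on I and the Borel σ-algebra on C(I, X). -/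
open MeasureTheory Topology

/-- The Lebesgue σ-algebra on `ℝ` (null-measurable sets for the volume measure). -/
abbrev Leb : MeasurableSpace ℝ :=
  inferInstanceAs (MeasurableSpace (NullMeasurableSpace ℝ volume))

/-- The trace of the Lebesgue σ-algebra on a subset `I ⊆ ℝ`. -/
abbrev LebI (I : Set ℝ) : MeasurableSpace I := Leb.comap Subtype.val

lemma ordConnected_isLocallyClosed {I : Set ℝ} (hI : I.OrdConnected) :
    IsLocallyClosed I := by
  rcases hI.isPreconnected.mem_intervals with h | h | h | h | h | h | h | h | h | h <;> rw [h]
  · exact isClosed_Icc.isLocallyClosed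
  · rw [← Set.Ici_inter_Iio]
    exact isClosed_Ici.isLocallyClosed.inter isOpen_Iio.isLocallyClosed
  · rw [← Set.Ioi_inter_Iic]
    exact isOpen_Ioi.isLocallyClosed.inter isClosed_Iic.isLocallyClosed
  · exact isOpen_Ioo.isLocallyClosed
  · exact isClosed_Ici.isLocallyClosed
  · exact isOpen_Ioi.isLocallyClosed
  · exact isClosed_Iic.isLocallyClosed
  · exact isOpen_Iio.isLocallyClosed
  · exact isClosed_univ.isLocallyClosed
  · exact isClosed_empty.isLocallyClosed

theorem stmt10 {X W : Type*} [TopologicalSpace X] [T2Space X]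
    [TopologicalSpace W] [T2Space W]
    (I : Set ℝ) (hI : I.OrdConnected)
    (F : I × X → W)
    (hF : @Measurable (I × X) W ((LebI I).prod (borel X)) (borel W) F) :
    @Measurable (I × C(I, X)) W ((LebI I).prod (borel C(I, X))) (borel W)
      (fun p => F (p.1, p.2 p.1)) := by
  haveI : LocallyCompactSpace I := (ordConnected_isLocallyClosed hI).locallyCompactSpace
  -- evaluation is continuous
  have heval : Continuous (fun p : I × C(I, X) => p.2 p.1) :=
    continuous_eval.comp (continuous_snd.prodMk continuous_fst)
  -- measurability of evaluation w.r.t. Borel σ-algebras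
  have h2 : @Measurable (I × C(I, X)) X ((borel I).prod (borel C(I, X))) (borel X)
      (fun p => p.2 p.1) := by
    letI mI : MeasurableSpace I := borel I
    letI mC : MeasurableSpace C(I, X) := borel C(I, X)
    letI mX : MeasurableSpace X := borel X
    haveI : BorelSpace I := ⟨rfl⟩
    haveI : BorelSpace C(I, X) := ⟨rfl⟩
    haveI : BorelSpace X := ⟨rfl⟩
    exact heval.measurable
  -- borel I ≤ LebI I
  have hle : borel (↥I) ≤ LebI I := by
    have : borel (↥I) = (borel ℝ).comap Subtype.val := borel_comap
    rw [this]
    exact MeasurableSpace.comap_mono fun s hs => hs.nullMeasurableSet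
  have hprod : (borel (↥I)).prod (borel C(I, X)) ≤ (LebI I).prod (borel C(I, X)) :=
    sup_le_sup (MeasurableSpace.comap_mono hle) le_rfl
  have h2' : @Measurable (I × C(I, X)) X ((LebI I).prod (borel C(I, X))) (borel X)
      (fun p => p.2 p.1) := h2.mono hprod le_rfl
  letI m1 : MeasurableSpace (I × C(I, X)) := (LebI I).prod (borel C(I, X))
  letI : MeasurableSpace X := borel X
  letI : MeasurableSpace W := borel W
  letI : MeasurableSpace I := LebI I
  have hfst : @Measurable (I × C(I, X)) I m1 (LebI I) Prod.fst := measurable_fst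
  exact hF.comp (hfst.prodMk h2')
end

section
/- Let X be a Hausdorff space, I ⊆ ℝ an interval closed and bounded on the left with left endpoint t₀, 𝒳 = C_loc(I, X), and 𝒰 ⊆ 𝒳 with Π_{t₀}𝒰 = X. Suppose K ⊆ X is compact and Π_{t₀}⁻¹(K) ∩ 𝒰 is compact in 𝒳. Then for every tight Borel probability measure μ₀ on X carried by K, there exists a tight Borel probability measure ρ on 𝒳, carried by the compact set Π_{t₀}⁻¹(K) ∩ 𝒰, with push-forward (Π_{t₀})ρ = μ₀. -/
/-!
On the compact sets `S = Π⁻¹(K) ∩ 𝒰` and `K` the evaluation map becomes a continuous surjection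
`φ : S → K` of compact Hausdorff spaces. Integration against `μ₀` is a positive functional on the
subspace `{g ∘ φ}` of `C(S, ℝ)`; this subspace contains the constants, so M. Riesz's extension
theorem extends the functional positively to all of `C(S, ℝ)`. The Riesz–Markov–Kakutani measure
`ν` of the extension then integrates every `g ∈ C(K, ℝ)` like `μ₀`, and uniqueness of the regular
measure representing a functional gives `φ_* ν = μ₀`.
-/

open MeasureTheory Topology Set CompactlySupported

theorem LinearMap.exists_nonneg_comp_eq_of_cofinal {F E : Type*} [AddCommGroup F] [Module ℝ F]
    [AddCommGroup E] [Module ℝ E] (s : PointedCone ℝ E) (T : F →ₗ[ℝ] E) (L : F →ₗ[ℝ] ℝ)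
    (hL : ∀ g, T g ∈ s → 0 ≤ L g) (hT : ∀ y, ∃ g, T g + y ∈ s) :
    ∃ Λ : E →ₗ[ℝ] ℝ, (∀ x ∈ s, 0 ≤ Λ x) ∧ Λ ∘ₗ T = L := by
  have hker : LinearMap.ker T ≤ LinearMap.ker L := fun g hg ↦ by
    rw [LinearMap.mem_ker] at hg ⊢
    have h₁ := hL g (by simp [hg])
    have h₂ := hL (-g) (by simp [hg])
    rw [map_neg] at h₂
    linarith
  let L' : E →ₗ.[ℝ] ℝ :=
    ⟨LinearMap.range T, (LinearMap.ker T).liftQ L hker ∘ₗ T.quotKerEquivRange.symm.toLinearMap⟩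
  have hL' : ∀ g, L' ⟨T g, LinearMap.mem_range_self T g⟩ = L g := fun g ↦ by
    simp [L', LinearMap.quotKerEquivRange_symm_apply_image]
  obtain ⟨Λ, hΛL', hΛ⟩ := riesz_extension s L'
    (by rintro ⟨_, g, rfl⟩ hg; exact (hL' g).symm ▸ hL g hg)
    (fun y ↦ let ⟨g, hg⟩ := hT y; ⟨⟨T g, LinearMap.mem_range_self T g⟩, hg⟩)
  exact ⟨Λ, hΛ, LinearMap.ext fun g ↦ (hΛL' _).trans (hL' g)⟩

instance CompactlySupportedContinuousMap.instPosSMulMono {α : Type*} [TopologicalSpace α] :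
    PosSMulMono ℝ C_c(α, ℝ) :=
  ⟨fun _ hc _ _ hfg x ↦ mul_le_mul_of_nonneg_left (hfg x) hc⟩

theorem MeasureTheory.Measure.InnerRegular.comap_of_isClosedEmbedding {α β : Type*}
    [TopologicalSpace α] [MeasurableSpace α] [BorelSpace α]
    [TopologicalSpace β] [MeasurableSpace β] [BorelSpace β]
    (μ : Measure β) [μ.InnerRegular] {f : α → β} (hf : IsClosedEmbedding f) :
    (μ.comap f).InnerRegular :=
  ⟨InnerRegular.innerRegular.comap hf.measurableEmbedding
    (fun _ hU ↦ hf.measurableEmbedding.measurableSet_image' hU)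
    (fun _ _ hK ↦ hf.isCompact_preimage hK)⟩

theorem MeasureTheory.Measure.exists_innerRegular_map_eq_of_surjective {S Y : Type*}
    [TopologicalSpace S] [CompactSpace S] [T2Space S] [MeasurableSpace S] [BorelSpace S]
    [TopologicalSpace Y] [CompactSpace Y] [T2Space Y] [MeasurableSpace Y] [BorelSpace Y]
    {φ : C(S, Y)} (hφ : Function.Surjective φ) (μ : Measure Y) [IsFiniteMeasure μ]
    [μ.InnerRegular] : ∃ ν : Measure S, ν.InnerRegular ∧ ν.map φ = μ := by
  let φc : CocompactMap S Y := ⟨φ, by simp [Filter.cocompact_eq_bot]⟩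
  obtain ⟨Λ, hΛ, hΛφ⟩ := LinearMap.exists_nonneg_comp_eq_of_cofinal (PointedCone.positive ℝ _)
    (CompactlySupportedContinuousMap.compLinearMap φc)
    (CompactlySupportedContinuousMap.integralPositiveLinearMap μ).toLinearMap
    (fun g hg ↦ integral_nonneg fun y ↦ by
      obtain ⟨s, rfl⟩ := hφ y
      exact hg s)
    (fun f ↦ by
      obtain ⟨m, hm⟩ := (isCompact_range f.continuous).bddBelow
      refine ⟨CompactlySupportedContinuousMap.continuousMapEquiv (ContinuousMap.const Y (-m)),
        fun s ↦ ?_⟩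
      have : m ≤ f s := hm ⟨s, rfl⟩
      change 0 ≤ -m + f s
      linarith)
  let ν := RealRMK.rieszMeasure (PositiveLinearMap.mk₀ Λ hΛ)
  have : (ν.map φ).InnerRegular := InnerRegular.map_of_continuous φ.continuous
  refine ⟨ν, inferInstance, ext_of_integral_eq_on_compactlySupported fun g ↦ ?_⟩
  rw [integral_map φ.continuous.aemeasurable (map_continuous g).aestronglyMeasurable]
  exact (RealRMK.integral_rieszMeasure _ (g.comp φc)).trans (LinearMap.congr_fun hΛφ g)

theorem MeasureTheory.Measure.exists_innerRegular_map_eq_of_isCompact {𝒳 X : Type*}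
    [TopologicalSpace 𝒳] [T2Space 𝒳] [MeasurableSpace 𝒳] [BorelSpace 𝒳]
    [TopologicalSpace X] [T2Space X] [MeasurableSpace X] [BorelSpace X]
    {π : 𝒳 → X} (hπ : Continuous π) {S : Set 𝒳} (hS : IsCompact S)
    (μ : Measure X) [IsFiniteMeasure μ] [μ.InnerRegular] (hμ : μ (π '' S)ᶜ = 0) :
    ∃ ρ : Measure 𝒳, ρ.InnerRegular ∧ ρ Sᶜ = 0 ∧ ρ.map π = μ := by
  set K := π '' S
  have hK : IsCompact K := hS.image hπ
  have : CompactSpace S := isCompact_iff_compactSpace.mp hS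
  have : CompactSpace K := isCompact_iff_compactSpace.mp hK
  have : (μ.comap ((↑) : K → X)).InnerRegular :=
    InnerRegular.comap_of_isClosedEmbedding μ (IsClosedEmbedding.subtypeVal hK.isClosed)
  let φ : C(S, K) := ⟨fun s ↦ ⟨π s, mem_image_of_mem π s.2⟩, by fun_prop⟩
  have hφ : Function.Surjective φ := by
    rintro ⟨_, s, hs, rfl⟩
    exact ⟨⟨s, hs⟩, rfl⟩
  obtain ⟨ν, hν, hνμ⟩ := exists_innerRegular_map_eq_of_surjective hφ (μ.comap ((↑) : K → X))
  refine ⟨ν.map ((↑) : S → 𝒳), InnerRegular.map_of_continuous continuous_subtype_val, ?_, ?_⟩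
  · rw [map_apply measurable_subtype_coe hS.measurableSet.compl]
    simp
  · have hπφ : π ∘ ((↑) : S → 𝒳) = ((↑) : K → X) ∘ φ := rfl
    rw [map_map hπ.measurable measurable_subtype_coe, hπφ,
      ← map_map measurable_subtype_coe φ.continuous.measurable, hνμ,
      map_comap_subtype_coe hK.measurableSet, restrict_eq_self_of_ae_mem (ae_iff.mpr hμ)]

theorem stmt16_general {X : Type*} [TopologicalSpace X] [T2Space X] [MeasurableSpace X] [BorelSpace X]
    (I : Set ℝ) (t₀ : I)
    [MeasurableSpace C(I, X)] [BorelSpace C(I, X)]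
    (𝒰 : Set C(I, X))
    (hsurj : (fun u : C(I, X) => u t₀) '' 𝒰 = Set.univ)
    (K : Set X)
    (hcpt : IsCompact ((fun u : C(I, X) => u t₀) ⁻¹' K ∩ 𝒰))
    (μ₀ : Measure X) [IsProbabilityMeasure μ₀]
    (hμreg : μ₀.InnerRegularWRT IsCompact MeasurableSet)
    (hμK : μ₀ Kᶜ = 0) :
    ∃ ρ : Measure C(I, X), IsProbabilityMeasure ρ ∧
      ρ.InnerRegularWRT IsCompact MeasurableSet ∧
      ρ (((fun u : C(I, X) => u t₀) ⁻¹' K ∩ 𝒰)ᶜ) = 0 ∧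
      ρ.map (fun u : C(I, X) => u t₀) = μ₀ := by
  have hπ : Continuous fun u : C(I, X) => u t₀ := continuous_eval_const t₀
  have : μ₀.InnerRegular := ⟨hμreg⟩
  have hK : (fun u : C(I, X) => u t₀) '' ((fun u : C(I, X) => u t₀) ⁻¹' K ∩ 𝒰) = K := by
    rw [image_preimage_inter, hsurj, inter_univ]
  obtain ⟨ρ, hρ, hρS, hρμ⟩ :=
    Measure.exists_innerRegular_map_eq_of_isCompact hπ hcpt μ₀ (by rwa [hK])
  refine ⟨ρ, ⟨?_⟩, hρ.innerRegular, hρS, hρμ⟩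
  rw [← measure_univ (μ := μ₀), ← hρμ, Measure.map_apply hπ.measurable MeasurableSet.univ,
    preimage_univ]

theorem stmt16 {X : Type*} [TopologicalSpace X] [T2Space X] [MeasurableSpace X] [BorelSpace X]
    (I : Set ℝ) (hI : I.OrdConnected) (t₀ : I) (ht₀ : IsLeast I (t₀ : ℝ))
    [MeasurableSpace C(I, X)] [BorelSpace C(I, X)]
    (𝒰 : Set C(I, X))
    (hsurj : (fun u : C(I, X) => u t₀) '' 𝒰 = Set.univ)
    (K : Set X) (hK : IsCompact K)
    (hcpt : IsCompact ((fun u : C(I, X) => u t₀) ⁻¹' K ∩ 𝒰))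
    (μ₀ : Measure X) [IsProbabilityMeasure μ₀]
    (hμreg : μ₀.InnerRegularWRT IsCompact MeasurableSet)
    (hμK : μ₀ Kᶜ = 0) :
    ∃ ρ : Measure C(I, X), IsProbabilityMeasure ρ ∧
      ρ.InnerRegularWRT IsCompact MeasurableSet ∧
      ρ (((fun u : C(I, X) => u t₀) ⁻¹' K ∩ 𝒰)ᶜ) = 0 ∧
      ρ.map (fun u : C(I, X) => u t₀) = μ₀ :=
  stmt16_general I t₀ 𝒰 hsurj K hcpt μ₀ hμreg hμK
end
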